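/- For every integer n ≥ 2, every spanner S ∈ X of the graph G_n, and every spanner Ŝ of G_n with Ŝ ∉ X, the value vector f(Ŝ) does not dominate the value vector f(S). -/

import Mathlib

namespace MSpPaper

open SimpleGraph

variable {V : Type*}

/-- Minimum total `c2`-weight of a walk from `u` to `v` using only edges in `F`
(the set of weights of such walks is a set of naturals; its infimum is `0` when no walk exists). -/
noncomputable def wdist (F : Set (Sym2 V)) (c2 : Sym2 V → ℕ) (u v : V) : ℕ :=
  sInf (Set.range fun p : (SimpleGraph.fromEdgeSet F).Walk u v => (p.edges.map c2).sum)

/-- `S` is a spanner of `G`: a subset of the edges such that the resulting subgraph is connected. -/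
def IsSpanner (G : SimpleGraph V) (S : Set (Sym2 V)) : Prop :=
  S ⊆ G.edgeSet ∧ (SimpleGraph.fromEdgeSet S).Connected

/-- First objective: total `c1`-cost of the spanner. -/
def f1 (c1 : Sym2 V → ℤ) (S : Finset (Sym2 V)) : ℤ := ∑ e ∈ S, c1 e

open scoped Classical in
/-- Second objective (stretch factor): maximum over pairs of distinct vertices of the
distance ratio `d^S(u,v)/d^E(u,v)` (junk value `0` if there is no pair of distinct vertices). -/
noncomputable def f2 [Fintype V] (E S : Set (Sym2 V)) (c2 : Sym2 V → ℕ) : ℚ :=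
  if h : ((Finset.univ : Finset (V × V)).filter fun p => p.1 ≠ p.2).Nonempty then
    ((Finset.univ : Finset (V × V)).filter fun p => p.1 ≠ p.2).sup' h
      (fun p => (wdist S c2 p.1 p.2 : ℚ) / (wdist E c2 p.1 p.2 : ℚ))
  else 0

/-- The value vector of a spanner. -/
noncomputable def valueVec [Fintype V] (G : SimpleGraph V) (c1 : Sym2 V → ℤ) (c2 : Sym2 V → ℕ)
    (S : Finset (Sym2 V)) : ℚ × ℚ :=
  ((f1 c1 S : ℚ), f2 G.edgeSet (↑S) c2)

/-- `y'` dominates `y`: componentwise `≤` and unequal. -/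
def Dominates (y' y : ℚ × ℚ) : Prop := y' ≤ y ∧ y' ≠ y

/-- The non-dominated set of an MSp instance. -/
def YN [Fintype V] (G : SimpleGraph V) (c1 : Sym2 V → ℤ) (c2 : Sym2 V → ℕ) : Set (ℚ × ℚ) :=
  {y | (∃ S : Finset (Sym2 V), IsSpanner G (↑S) ∧ valueVec G c1 c2 S = y) ∧
       ∀ S' : Finset (Sym2 V), IsSpanner G (↑S') → ¬ Dominates (valueVec G c1 c2 S') y}


/-! ### The family of instances `G_n` from Section 3 -/

/-- Vertices of `G_n`: for each `i`, the vertex `(i,0)` is `v_i`, `(i,1)` is `v_i'`,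
and `(i,2)` is `w_i`. -/
abbrev Vtx (n : ℕ) := Fin n × Fin 3

/-- The weights `(c1, c2)` of the (ordered) pair `a b` of vertices of `G_n`;
`(0, 0)` (in particular `c2 = 0`) marks non-edges. -/
def wtG (n : ℕ) (a b : Vtx n) : ℤ × ℕ :=
  if a.2 = 0 ∧ b.2 = 2 ∧ a.1 = b.1 then (2 ^ ((a.1 : ℕ) + 1), 2 ^ ((a.1 : ℕ) + 1))
  else if a.2 = 0 ∧ b.2 = 1 ∧ a.1 = b.1 then (0, 2 ^ ((a.1 : ℕ) + 1))
  else if a.2 = 1 ∧ b.2 = 2 ∧ a.1 = b.1 then (0, 2 ^ ((a.1 : ℕ) + 1))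
  else if a.2 = 2 ∧ b.2 = 0 ∧ (b.1 : ℕ) = (a.1 : ℕ) + 1 then (0, 1)
  else if a.2 = 0 ∧ b.2 = 2 ∧ (a.1 : ℕ) = 0 ∧ (b.1 : ℕ) = n - 1 then (2 ^ (n + 1), 1)
  else (0, 0)

/-- The cost function `c1` of `G_n`. -/
def c1G (n : ℕ) : Sym2 (Vtx n) → ℤ :=
  Sym2.lift ⟨fun a b => (wtG n a b).1 + (wtG n b a).1, fun _ _ => add_comm _ _⟩

/-- The length function `c2` of `G_n`. -/
def c2G (n : ℕ) : Sym2 (Vtx n) → ℕ :=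
  Sym2.lift ⟨fun a b => (wtG n a b).2 + (wtG n b a).2, fun _ _ => add_comm _ _⟩

/-- The edge set of `G_n`: exactly the pairs with positive length. -/
def EG (n : ℕ) : Set (Sym2 (Vtx n)) := {e | c2G n e ≠ 0}

/-- The graph `G_n`. -/
def Gn (n : ℕ) : SimpleGraph (Vtx n) := SimpleGraph.fromEdgeSet (EG n)

/-- The vertex `v_i`. -/
def vG (n : ℕ) (i : Fin n) : Vtx n := (i, 0)
/-- The vertex `v_i'`. -/
def pG (n : ℕ) (i : Fin n) : Vtx n := (i, 1)
/-- The vertex `w_i`. -/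
def wG (n : ℕ) (i : Fin n) : Vtx n := (i, 2)
/-- The vertex `s = v_1`. -/
def sG (n : ℕ) (hn : 0 < n) : Vtx n := (⟨0, hn⟩, 0)
/-- The vertex `t = w_n`. -/
def tG (n : ℕ) (hn : 0 < n) : Vtx n := (⟨n - 1, Nat.sub_lt hn one_pos⟩, 2)

/-- Membership in `X`: spanners of `G_n` containing every edge of zero `c1`-cost and
not containing the edge `{s, t}`. -/
def memX (n : ℕ) (hn : 0 < n) (S : Finset (Sym2 (Vtx n))) : Prop :=
  IsSpanner (Gn n) (↑S) ∧ (∀ e ∈ (Gn n).edgeSet, c1G n e = 0 → e ∈ S) ∧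
    s(sG n hn, tG n hn) ∉ S


/-!
Index the gadgets from `0`, so that gadget `i` carries the weights `2^(i+1)`. For `T ⊆ E` without
the shortcut `{s, t}`, passing through gadget `i` inside `T` costs `crossCost T i`: `2^(i+1)` along
the direct edge `{v_i, w_i}` if `T` contains it, `2^(i+2)` through `v_i'` otherwise. The spine
from `s` to `t` then has length `spineLength T = Σ_i crossCost T i + (n - 1)`, and since gadget `i`
contributes `2^(i+2)` to `f1 T + spineLength T` either way, this sum does not depend on `T`.

If `T` contains every edge of cost `0`, any two vertices are joined inside `T` by a walk of length
at most `spineLength T`, so `f2 T ≤ spineLength T`. If `T` is a spanner, the position along the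
spine is a potential that changes by at most `c2 e` across every edge `e` of `T`, so
`d^T(s, t) ≥ spineLength T`; as `d^E(s, t) = 1`, also `f2 T ≥ spineLength T`. Hence
`f1 Ŝ + f2 Ŝ ≥ f1 S + f2 S`, and domination forces equality. If `{s, t} ∈ Ŝ` instead, then
`f1 Ŝ ≥ 2^(n+1) > Σ_i 2^(i+1) ≥ f1 S`.
-/

section WeightedWalks

variable {F : Set (Sym2 V)} {c : Sym2 V → ℕ}

def ReachWithin (F : Set (Sym2 V)) (c : Sym2 V → ℕ) (u v : V) (k : ℕ) : Prop :=
  ∃ p : (fromEdgeSet F).Walk u v, (p.edges.map c).sum ≤ k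

namespace ReachWithin

theorem refl (u : V) : ReachWithin F c u u 0 := ⟨.nil, by simp⟩

theorem mono {u v : V} {k l : ℕ} (h : ReachWithin F c u v k) (hkl : k ≤ l) :
    ReachWithin F c u v l := by
  obtain ⟨p, hp⟩ := h
  exact ⟨p, hp.trans hkl⟩

theorem trans {u v w : V} {k l : ℕ} (h₁ : ReachWithin F c u v k) (h₂ : ReachWithin F c v w l) :
    ReachWithin F c u w (k + l) := by
  obtain ⟨p, hp⟩ := h₁
  obtain ⟨q, hq⟩ := h₂
  exact ⟨p.append q, by simp only [Walk.edges_append, List.map_append, List.sum_append]; omega⟩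

theorem symm {u v : V} {k : ℕ} (h : ReachWithin F c u v k) : ReachWithin F c v u k := by
  obtain ⟨p, hp⟩ := h
  exact ⟨p.reverse, by simpa [Walk.edges_reverse, List.sum_reverse] using hp⟩

theorem of_mem {u v : V} (h : s(u, v) ∈ F) (huv : u ≠ v) : ReachWithin F c u v (c s(u, v)) :=
  ⟨.cons ((fromEdgeSet_adj F).mpr ⟨h, huv⟩) .nil, by simp⟩

end ReachWithin

theorem wdist_le_of_reachWithin {u v : V} {k : ℕ} (h : ReachWithin F c u v k) :
    wdist F c u v ≤ k := by
  obtain ⟨p, hp⟩ := h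
  exact (Nat.sInf_le (Set.mem_range_self p)).trans hp

theorem exists_walk_sum_eq_wdist {u v : V} (h : (fromEdgeSet F).Reachable u v) :
    ∃ p : (fromEdgeSet F).Walk u v, (p.edges.map c).sum = wdist F c u v := by
  obtain ⟨p⟩ := h
  exact Nat.sInf_mem (Set.range_nonempty_iff_nonempty.mpr ⟨p⟩)

theorem forall_mem_mk_le_add_iff (φ : V → ℕ) (a b : V) (k : ℕ) :
    (∀ x ∈ s(a, b), ∀ y ∈ s(a, b), φ y ≤ φ x + k) ↔ φ b ≤ φ a + k ∧ φ a ≤ φ b + k := by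
  simp only [Sym2.mem_iff, forall_eq_or_imp, forall_eq]
  omega

theorem le_add_walk_sum_of_lipschitz (φ : V → ℕ)
    (hφ : ∀ e ∈ F, ∀ x ∈ e, ∀ y ∈ e, φ y ≤ φ x + c e) {u v : V}
    (p : (fromEdgeSet F).Walk u v) : φ v ≤ φ u + (p.edges.map c).sum := by
  induction p with
  | nil => simp
  | @cons x y z hxy p ih =>
    have hstep := hφ _ ((fromEdgeSet_adj F).mp hxy).1 x (Sym2.mem_mk_left x y) y
      (Sym2.mem_mk_right x y)
    simp only [Walk.edges_cons, List.map_cons, List.sum_cons] at ih ⊢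
    omega

theorem le_add_wdist_of_lipschitz (φ : V → ℕ)
    (hφ : ∀ e ∈ F, ∀ x ∈ e, ∀ y ∈ e, φ y ≤ φ x + c e) {u v : V}
    (h : (fromEdgeSet F).Reachable u v) : φ v ≤ φ u + wdist F c u v := by
  obtain ⟨p, hp⟩ := exists_walk_sum_eq_wdist (c := c) h
  exact hp ▸ le_add_walk_sum_of_lipschitz φ hφ p

theorem one_le_wdist (hc : ∀ e ∈ F, c e ≠ 0) {u v : V} (huv : u ≠ v)
    (h : (fromEdgeSet F).Reachable u v) : 1 ≤ wdist F c u v := by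
  classical
  have := le_add_wdist_of_lipschitz (c := c) (fun x => if x = u then 0 else 1)
    (fun e he x _ y _ => by have := hc e he; split_ifs <;> omega) h
  simp only [huv.symm, if_true, if_false] at this
  omega

end WeightedWalks

section Stretch

variable [Fintype V] {E S : Set (Sym2 V)} {c : Sym2 V → ℕ}

theorem div_wdist_le_f2 {u v : V} (huv : u ≠ v) :
    (wdist S c u v : ℚ) / wdist E c u v ≤ f2 E S c := by
  classical
  have hmem : (u, v) ∈ (Finset.univ : Finset (V × V)).filter fun p => p.1 ≠ p.2 := by simpa
  unfold f2
  rw [dif_pos ⟨_, hmem⟩]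
  exact Finset.le_sup' (fun p : V × V => (wdist S c p.1 p.2 : ℚ) / wdist E c p.1 p.2) hmem

theorem f2_le_of_forall_wdist_le {B : ℚ} (hB : 0 ≤ B) (h : ∀ u v, (wdist S c u v : ℚ) ≤ B) :
    f2 E S c ≤ B := by
  unfold f2
  split_ifs
  · refine Finset.sup'_le _ _ fun p _ => ?_
    rcases Nat.eq_zero_or_pos (wdist E c p.1 p.2) with h0 | hpos
    · simpa [h0] using hB
    · exact div_le_of_le_mul₀ (Nat.cast_nonneg _) hB
        ((h p.1 p.2).trans (le_mul_of_one_le_right hB (by exact_mod_cast hpos)))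
  · exact hB

end Stretch

section Edges

variable {n : ℕ}

theorem EG_induction (hn : 0 < n) {P : Sym2 (Vtx n) → Prop}
    (vw : ∀ i, P s(vG n i, wG n i)) (vp : ∀ i, P s(vG n i, pG n i))
    (pw : ∀ i, P s(pG n i, wG n i)) (wv : ∀ i j : Fin n, (j : ℕ) = i + 1 → P s(wG n i, vG n j))
    (st : P s(sG n hn, tG n hn)) : ∀ e ∈ EG n, P e := by
  suffices ordered : ∀ a b, (wtG n a b).2 ≠ 0 → P s(a, b) by
    intro e he
    induction e using Sym2.ind with
    | _ a b =>
      have he : (wtG n a b).2 + (wtG n b a).2 ≠ 0 := he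
      rcases (by omega : (wtG n a b).2 ≠ 0 ∨ (wtG n b a).2 ≠ 0) with h | h
      · exact ordered a b h
      · exact Sym2.eq_swap ▸ ordered b a h
  rintro ⟨i, a⟩ ⟨j, b⟩ h
  unfold wtG at h
  split_ifs at h with h₁ h₂ h₃ h₄ h₅
  · obtain ⟨rfl, rfl, rfl⟩ := h₁; exact vw i
  · obtain ⟨rfl, rfl, rfl⟩ := h₂; exact vp i
  · obtain ⟨rfl, rfl, rfl⟩ := h₃; exact pw i
  · obtain ⟨rfl, rfl, hij⟩ := h₄; exact wv i j hij
  · obtain ⟨rfl, rfl, hi, hj⟩ := h₅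
    obtain rfl : i = ⟨0, hn⟩ := Fin.ext (by simpa using hi)
    obtain rfl : j = ⟨n - 1, Nat.sub_lt hn one_pos⟩ := Fin.ext (by simpa using hj)
    exact st
  · exact absurd rfl h

section Weights

variable (i : Fin n)

@[simp] theorem c1G_vw : c1G n s(vG n i, wG n i) = 2 ^ ((i : ℕ) + 1) := by simp [c1G, wtG, vG, wG]
@[simp] theorem c2G_vw : c2G n s(vG n i, wG n i) = 2 ^ ((i : ℕ) + 1) := by simp [c2G, wtG, vG, wG]
@[simp] theorem c1G_vp : c1G n s(vG n i, pG n i) = 0 := by simp [c1G, wtG, vG, pG]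
@[simp] theorem c2G_vp : c2G n s(vG n i, pG n i) = 2 ^ ((i : ℕ) + 1) := by simp [c2G, wtG, vG, pG]
@[simp] theorem c1G_pw : c1G n s(pG n i, wG n i) = 0 := by simp [c1G, wtG, pG, wG]
@[simp] theorem c2G_pw : c2G n s(pG n i, wG n i) = 2 ^ ((i : ℕ) + 1) := by simp [c2G, wtG, pG, wG]

variable {i} {j : Fin n}

theorem c1G_wv (hij : (j : ℕ) = i + 1) : c1G n s(wG n i, vG n j) = 0 := by
  have : j ≠ i := fun h => by subst h; omega
  simp [c1G, wtG, wG, vG, hij, this]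

theorem c2G_wv (hij : (j : ℕ) = i + 1) : c2G n s(wG n i, vG n j) = 1 := by
  have : j ≠ i := fun h => by subst h; omega
  simp [c2G, wtG, wG, vG, hij, this]

theorem sG_fst_ne_tG_fst (hn : 2 ≤ n) : (sG n (zero_lt_two.trans_le hn)).1 ≠ (tG n (zero_lt_two.trans_le hn)).1 := by
  simp [sG, tG, Fin.ext_iff]
  omega

theorem c1G_st (hn : 2 ≤ n) : c1G n s(sG n (zero_lt_two.trans_le hn), tG n (zero_lt_two.trans_le hn)) = 2 ^ (n + 1) := by
  have := sG_fst_ne_tG_fst hn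
  simp_all [c1G, wtG, sG, tG]

theorem c2G_st (hn : 2 ≤ n) : c2G n s(sG n (zero_lt_two.trans_le hn), tG n (zero_lt_two.trans_le hn)) = 1 := by
  have := sG_fst_ne_tG_fst hn
  simp_all [c2G, wtG, sG, tG]

end Weights

theorem c1G_nonneg (e : Sym2 (Vtx n)) : 0 ≤ c1G n e := by
  induction e using Sym2.ind with
  | _ a b => simp only [c1G, wtG, Sym2.lift_mk]; split_ifs <;> positivity

theorem mem_edgeSet_Gn {a b : Vtx n} :
    s(a, b) ∈ (Gn n).edgeSet ↔ c2G n s(a, b) ≠ 0 ∧ a ≠ b := by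
  simp [Gn, EG]

theorem edgeSet_Gn_subset : (Gn n).edgeSet ⊆ EG n := by
  simp [Gn]

theorem sG_ne_tG (hn : 0 < n) : sG n hn ≠ tG n hn := by
  simp [sG, tG]

def ContainsZeroCostEdges (T : Finset (Sym2 (Vtx n))) : Prop :=
  ∀ e ∈ (Gn n).edgeSet, c1G n e = 0 → e ∈ T

end Edges

section Spine

variable {n : ℕ} (T : Finset (Sym2 (Vtx n)))

def crossCost (k : ℕ) : ℕ :=
  if ∃ h : k < n, s(vG n ⟨k, h⟩, wG n ⟨k, h⟩) ∈ T then 2 ^ (k + 1) else 2 ^ (k + 2)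

def spinePos (j : ℕ) : ℕ := ∑ k ∈ Finset.range j, (crossCost T k + 1)

def potential (x : Vtx n) : ℕ :=
  spinePos T x.1 + ![0, 2 ^ ((x.1 : ℕ) + 1), crossCost T x.1] x.2

def spineLength : ℕ := ∑ k ∈ Finset.range n, crossCost T k + (n - 1)

variable {T}

theorem crossCost_of_mem {i : Fin n} (h : s(vG n i, wG n i) ∈ T) :
    crossCost T i = 2 ^ ((i : ℕ) + 1) := by
  simp [crossCost, h]

theorem crossCost_of_not_mem {i : Fin n} (h : s(vG n i, wG n i) ∉ T) :
    crossCost T i = 2 ^ ((i : ℕ) + 2) := by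
  simp [crossCost, h]

theorem pow_le_crossCost (k : ℕ) : 2 ^ (k + 1) ≤ crossCost T k := by
  unfold crossCost
  split_ifs
  · rfl
  · exact Nat.pow_le_pow_right two_pos (by omega)

theorem crossCost_le (k : ℕ) : crossCost T k ≤ 2 ^ (k + 2) := by
  unfold crossCost
  split_ifs
  · exact Nat.pow_le_pow_right two_pos (by omega)
  · rfl

theorem spinePos_succ (j : ℕ) : spinePos T (j + 1) = spinePos T j + crossCost T j + 1 :=
  Finset.sum_range_succ _ j

theorem spinePos_eq (j : ℕ) : spinePos T j = ∑ k ∈ Finset.range j, crossCost T k + j := by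
  simp [spinePos, Finset.sum_add_distrib]

theorem spinePos_mono : Monotone (spinePos T) := fun _ _ h =>
  Finset.sum_le_sum_of_subset (Finset.range_mono h)

@[simp] theorem potential_vG (i : Fin n) : potential T (vG n i) = spinePos T i := by
  simp [potential, vG]

@[simp] theorem potential_pG (i : Fin n) :
    potential T (pG n i) = spinePos T i + 2 ^ ((i : ℕ) + 1) := by
  simp [potential, pG]

@[simp] theorem potential_wG (i : Fin n) :
    potential T (wG n i) = spinePos T i + crossCost T i := by
  simp [potential, wG]

theorem potential_sG (hn : 0 < n) : potential T (sG n hn) = 0 := by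
  simp [potential, sG, spinePos]

theorem potential_tG (hn : 0 < n) : potential T (tG n hn) = spineLength T := by
  obtain ⟨m, rfl⟩ : ∃ m, n = m + 1 := ⟨n - 1, by omega⟩
  simp [potential, tG, spineLength, spinePos_eq, Finset.sum_range_succ]
  omega

end Spine

section LowerBound

variable {n : ℕ} {T : Finset (Sym2 (Vtx n))}

theorem potential_le_add_c2G (hn : 0 < n) (hT : ↑T ⊆ EG n) (hst : s(sG n hn, tG n hn) ∉ T) :
    ∀ e ∈ T, ∀ x ∈ e, ∀ y ∈ e, potential T y ≤ potential T x + c2G n e := by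
  intro e he
  refine EG_induction (P := fun e => e ∈ T → ∀ x ∈ e, ∀ y ∈ e,
      potential T y ≤ potential T x + c2G n e) hn ?_ ?_ ?_ ?_ ?_ e (hT he) he
  · intro i hi
    rw [forall_mem_mk_le_add_iff]
    simp [crossCost_of_mem hi, add_assoc]
  · intro i _
    rw [forall_mem_mk_le_add_iff]
    simp [add_assoc]
  · intro i _
    have := pow_le_crossCost (T := T) i
    have := crossCost_le (T := T) i
    rw [forall_mem_mk_le_add_iff]
    simp only [potential_pG, potential_wG, c2G_pw, pow_succ] at *
    omega
  · intro i j hij _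
    rw [forall_mem_mk_le_add_iff]
    simp only [potential_wG, potential_vG, c2G_wv hij, hij, spinePos_succ]
    omega
  · exact fun h => absurd h hst

theorem spineLength_le_wdist (hn : 0 < n) (hT : ↑T ⊆ EG n) (hst : s(sG n hn, tG n hn) ∉ T)
    (hconn : (fromEdgeSet (T : Set (Sym2 (Vtx n)))).Connected) :
    spineLength T ≤ wdist ↑T (c2G n) (sG n hn) (tG n hn) := by
  have := le_add_wdist_of_lipschitz (potential T) (potential_le_add_c2G hn hT hst)
    (hconn.preconnected (sG n hn) (tG n hn))
  rwa [potential_sG, potential_tG, zero_add] at this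

theorem wdist_edgeSet_sG_tG (hn : 2 ≤ n) :
    wdist (Gn n).edgeSet (c2G n) (sG n (zero_lt_two.trans_le hn)) (tG n (zero_lt_two.trans_le hn)) = 1 := by
  have hst : s(sG n (zero_lt_two.trans_le hn), tG n (zero_lt_two.trans_le hn)) ∈ (Gn n).edgeSet :=
    mem_edgeSet_Gn.mpr ⟨by simp [c2G_st hn], sG_ne_tG _⟩
  have hreach := ReachWithin.of_mem (c := c2G n) hst (sG_ne_tG _)
  refine le_antisymm ((wdist_le_of_reachWithin hreach).trans (c2G_st hn).le) ?_
  obtain ⟨p, -⟩ := hreach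
  exact one_le_wdist (fun e he => edgeSet_Gn_subset he) (sG_ne_tG _) p.reachable

theorem spineLength_le_f2 (hn : 2 ≤ n) (hT : IsSpanner (Gn n) ↑T)
    (hst : s(sG n (zero_lt_two.trans_le hn), tG n (zero_lt_two.trans_le hn)) ∉ T) :
    (spineLength T : ℚ) ≤ f2 (Gn n).edgeSet ↑T (c2G n) := by
  have h := div_wdist_le_f2 (E := (Gn n).edgeSet) (S := ↑T) (c := c2G n) (sG_ne_tG (by omega))
  rw [wdist_edgeSet_sG_tG hn, Nat.cast_one, div_one] at h
  exact le_trans (by exact_mod_cast spineLength_le_wdist _ (hT.1.trans edgeSet_Gn_subset) hst hT.2) h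

end LowerBound

section UpperBound

variable {n : ℕ} {S : Finset (Sym2 (Vtx n))}

theorem reachWithin_gadget (hz : ContainsZeroCostEdges S) (i : Fin n) (a b : Fin 3) :
    ReachWithin ↑S (c2G n) (i, a) (i, b) (crossCost S i) := by
  have hvp : ReachWithin ↑S (c2G n) (vG n i) (pG n i) (2 ^ ((i : ℕ) + 1)) := by
    simpa using ReachWithin.of_mem (c := c2G n)
      (hz _ (mem_edgeSet_Gn.mpr ⟨by simp, by simp [vG, pG]⟩) (c1G_vp i)) (by simp [vG, pG])
  have hpw : ReachWithin ↑S (c2G n) (pG n i) (wG n i) (2 ^ ((i : ℕ) + 1)) := by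
    simpa using ReachWithin.of_mem (c := c2G n)
      (hz _ (mem_edgeSet_Gn.mpr ⟨by simp, by simp [pG, wG]⟩) (c1G_pw i)) (by simp [pG, wG])
  have hvw : ReachWithin ↑S (c2G n) (vG n i) (wG n i) (crossCost S i) := by
    by_cases h : s(vG n i, wG n i) ∈ S
    · simpa [crossCost_of_mem h] using ReachWithin.of_mem (c := c2G n) h (by simp [vG, wG])
    · rw [crossCost_of_not_mem h, pow_succ, mul_two]
      exact hvp.trans hpw
  have hvp' := hvp.mono (pow_le_crossCost (T := S) i)
  have hpw' := hpw.mono (pow_le_crossCost (T := S) i)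
  have hrefl := (ReachWithin.refl (F := ↑S) (c := c2G n) (i, a)).mono (Nat.zero_le (crossCost S i))
  fin_cases a <;> fin_cases b
  all_goals first
    | exact hrefl | exact hvp' | exact hpw' | exact hvw
    | exact hvp'.symm | exact hpw'.symm | exact hvw.symm

theorem reachWithin_link (hz : ContainsZeroCostEdges S) {i j : Fin n} (hij : (j : ℕ) = i + 1) :
    ReachWithin ↑S (c2G n) (wG n i) (vG n j) 1 := by
  have hne : wG n i ≠ vG n j := by simp [wG, vG]
  simpa [c2G_wv hij] using ReachWithin.of_mem (c := c2G n)
    (hz _ (mem_edgeSet_Gn.mpr ⟨by simp [c2G_wv hij], hne⟩) (c1G_wv hij)) hne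

theorem reachWithin_spine (hz : ContainsZeroCostEdges S) {i j : ℕ} (hij : i ≤ j) (hj : j < n) :
    ReachWithin ↑S (c2G n) (vG n ⟨i, hij.trans_lt hj⟩) (vG n ⟨j, hj⟩)
      (spinePos S j - spinePos S i) := by
  induction j, hij using Nat.le_induction with
  | base => simpa using ReachWithin.refl (F := ↑S) (c := c2G n) (vG n ⟨i, hj⟩)
  | succ j hij ih =>
    have hmono := spinePos_mono (T := S) hij
    refine ((ih (by omega)).trans ((reachWithin_gadget hz ⟨j, by omega⟩ 0 2).trans
      (reachWithin_link hz (j := ⟨j + 1, hj⟩) rfl))).mono ?_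
    rw [spinePos_succ]
    dsimp only
    omega

theorem reachWithin_spineLength (hz : ContainsZeroCostEdges S) (u v : Vtx n) :
    ReachWithin ↑S (c2G n) u v (spineLength S) := by
  wlog h : u.1 ≤ v.1 generalizing u v
  · exact (this v u (le_of_not_ge h)).symm
  obtain ⟨i, a⟩ := u
  obtain ⟨j, b⟩ := v
  dsimp only at h
  have hcross : ∀ k : Fin n, crossCost S k ≤ ∑ k ∈ Finset.range n, crossCost S k := fun k =>
    Finset.single_le_sum (fun _ _ => Nat.zero_le _) (Finset.mem_range.mpr k.isLt)
  rcases h.eq_or_lt with hij | hij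
  · obtain rfl : i = j := hij
    exact (reachWithin_gadget hz i a b).mono ((hcross i).trans (Nat.le_add_right _ _))
  · have hwalk := (reachWithin_gadget hz i a 2).trans
      ((reachWithin_link hz (j := ⟨i + 1, by omega⟩) rfl).trans
      ((reachWithin_spine hz (show (i : ℕ) + 1 ≤ j by omega) j.isLt).trans
      (reachWithin_gadget hz j 0 b)))
    refine hwalk.mono ?_
    have h1 := spinePos_succ (T := S) i
    have h2 := spinePos_mono (T := S) (show (i : ℕ) + 1 ≤ j by omega)
    have h3 := spinePos_mono (T := S) (show (j : ℕ) + 1 ≤ n by omega)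
    have h4 := spinePos_succ (T := S) j
    rw [spinePos_eq n] at h3
    rw [spineLength]
    omega

theorem f2_le_spineLength (hz : ContainsZeroCostEdges S) :
    f2 (Gn n).edgeSet ↑S (c2G n) ≤ spineLength S :=
  f2_le_of_forall_wdist_le (Nat.cast_nonneg _) fun u v => by
    exact_mod_cast wdist_le_of_reachWithin (reachWithin_spineLength hz u v)

end UpperBound

section Cost

variable {n : ℕ} {T : Finset (Sym2 (Vtx n))}

theorem c1G_eq_sum (hn : 0 < n) {e : Sym2 (Vtx n)} (he : e ∈ EG n) (hst : e ≠ s(sG n hn, tG n hn)) :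
    c1G n e = ∑ i : Fin n, if s(vG n i, wG n i) = e then 2 ^ ((i : ℕ) + 1) else 0 := by
  refine EG_induction (P := fun e => e ≠ s(sG n hn, tG n hn) →
      c1G n e = ∑ i : Fin n, if s(vG n i, wG n i) = e then 2 ^ ((i : ℕ) + 1) else 0)
    hn ?_ ?_ ?_ ?_ ?_ e he hst
  · intro i _
    rw [c1G_vw]
    simp [vG, wG]
  · intro i _
    rw [c1G_vp]
    simp [vG, wG, pG]
  · intro i _
    rw [c1G_pw]
    simp [vG, wG, pG]
  · intro i j hij _
    rw [c1G_wv hij]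
    refine (Finset.sum_eq_zero fun k _ => if_neg ?_).symm
    simp only [vG, wG, Sym2.eq_iff, Prod.mk.injEq]
    rintro (⟨⟨-, h⟩, -⟩ | ⟨⟨rfl, -⟩, rfl, -⟩)
    · exact absurd h (by decide)
    · omega
  · exact fun h => absurd rfl h

theorem f1_eq_sum (hn : 0 < n) (hT : ↑T ⊆ EG n) (hst : s(sG n hn, tG n hn) ∉ T) :
    f1 (c1G n) T = ∑ i : Fin n, if s(vG n i, wG n i) ∈ T then 2 ^ ((i : ℕ) + 1) else 0 := by
  rw [f1, Finset.sum_congr rfl fun e he => c1G_eq_sum hn (hT he) (ne_of_mem_of_not_mem he hst),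
    Finset.sum_comm]
  simp

theorem f1_add_spineLength (hn : 0 < n) (hT : ↑T ⊆ EG n) (hst : s(sG n hn, tG n hn) ∉ T) :
    f1 (c1G n) T + spineLength T = ∑ k ∈ Finset.range n, (2 : ℤ) ^ (k + 2) + (n - 1 : ℕ) := by
  rw [f1_eq_sum hn hT hst, spineLength, Nat.cast_add, ← add_assoc, Nat.cast_sum,
    ← Fin.sum_univ_eq_sum_range (fun k => (crossCost T k : ℤ)),
    ← Fin.sum_univ_eq_sum_range (fun k => (2 : ℤ) ^ (k + 2)), ← Finset.sum_add_distrib]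
  congr 1
  refine Finset.sum_congr rfl fun i _ => ?_
  by_cases h : s(vG n i, wG n i) ∈ T
  · simp [h, crossCost_of_mem h, pow_succ]
    ring
  · simp [h, crossCost_of_not_mem h]

theorem f1_lt_two_pow (hn : 0 < n) (hT : ↑T ⊆ EG n) (hst : s(sG n hn, tG n hn) ∉ T) :
    f1 (c1G n) T < 2 ^ (n + 1) := by
  have hgeom : ∑ k ∈ Finset.range n, 2 ^ k < 2 ^ n :=
    Nat.geomSum_lt le_rfl fun k hk => Finset.mem_range.mp hk
  calc f1 (c1G n) T ≤ ∑ i : Fin n, (2 : ℤ) ^ ((i : ℕ) + 1) := by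
        rw [f1_eq_sum hn hT hst]
        exact Finset.sum_le_sum fun i _ => by split_ifs <;> simp
    _ = 2 * ∑ k ∈ Finset.range n, (2 : ℤ) ^ k := by
        rw [Fin.sum_univ_eq_sum_range (fun k => (2 : ℤ) ^ (k + 1)), Finset.mul_sum]
        simp [pow_succ, mul_comm]
    _ < 2 * 2 ^ n := by exact_mod_cast Nat.mul_lt_mul_of_pos_left hgeom two_pos
    _ = 2 ^ (n + 1) := by ring

theorem two_pow_le_f1 (hn : 2 ≤ n) (hst : s(sG n (zero_lt_two.trans_le hn), tG n (zero_lt_two.trans_le hn)) ∈ T) :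
    2 ^ (n + 1) ≤ f1 (c1G n) T :=
  c1G_st hn ▸ Finset.single_le_sum (fun e _ => c1G_nonneg e) hst

end Cost

/-- For `n ≥ 2`, no spanner of `G_n` outside `X` has a value vector
dominating the value vector of a spanner in `X`. -/
theorem not_dominated_by_outside_X (n : ℕ) (hn : 2 ≤ n) (S Shat : Finset (Sym2 (Vtx n)))
    (hS : memX n (by omega) S) (hShat : IsSpanner (Gn n) (↑Shat)) :
    ¬ Dominates (valueVec (Gn n) (c1G n) (c2G n) Shat) (valueVec (Gn n) (c1G n) (c2G n) S) := by
  rintro ⟨hle, hne⟩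
  obtain ⟨hf1, hf2⟩ := Prod.mk_le_mk.mp hle
  have hSE : ↑S ⊆ EG n := hS.1.1.trans edgeSet_Gn_subset
  by_cases hst : s(sG n (by omega), tG n (by omega)) ∈ Shat
  · have hlt := (f1_lt_two_pow _ hSE hS.2.2).trans_le (two_pow_le_f1 hn hst)
    exact absurd hf1 (not_le.mpr (by exact_mod_cast hlt))
  · have hcost : (f1 (c1G n) Shat : ℚ) + spineLength Shat = f1 (c1G n) S + spineLength S := by
      exact_mod_cast (f1_add_spineLength _ (hShat.1.trans edgeSet_Gn_subset) hst).trans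
        (f1_add_spineLength _ hSE hS.2.2).symm
    have hf2S := f2_le_spineLength hS.2.1
    have hf2Shat := spineLength_le_f2 hn hShat hst
    dsimp only [valueVec] at hf1 hf2 hne
    exact hne (Prod.ext (by linarith) (by linarith))

end MSpPaper
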